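/- arXiv:2111.05203 — 12 statements merged into one kernel-verified Lean document; each statement's English description precedes it below -/
import Mathlib

section
/- Let ω > 0, T* > 0 and L* ∈ ℝ. The vector x₀* = ( −L*/2 , (ωL*/2)·(e^{ωT*}+1)/(e^{ωT*}−1) ) is the unique vector in ℝ² satisfying x₀* = A(ω,T*)·x₀* + b·L*, i.e. it is the unique fixed point of the discrete step-to-step walking map with constant step length L* and step time T*. -/
open Real

/- Cramer's rule: the system `(A - 1) (x, v) = (L, 0)` has determinant
`(c - 1)² - s² = 2 (1 - c)`, which vanishes only at `c = 1`. -/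
lemma walking_step_fixed_iff {ω c s L : ℝ} (hω : ω ≠ 0) (hcs : c ^ 2 - s ^ 2 = 1) (hc : c ≠ 1)
    (x v : ℝ) :
    (c * x + s / ω * v - L = x ∧ ω * s * x + c * v = v) ↔
      x = -L / 2 ∧ v = ω * L / 2 * (s / (c - 1)) := by
  have hc' : c - 1 ≠ 0 := sub_ne_zero.mpr hc
  constructor
  · rintro ⟨hx, hv⟩
    have hdet : -2 * ω * (c - 1) * (x + L / 2) = 0 := by
      field_simp at hx
      linear_combination (c - 1) * hx - s * hv - ω * x * hcs
    have hx' : x = -L / 2 := by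
      have := (mul_eq_zero.mp hdet).resolve_left (by simp [hω, hc'])
      linarith
    refine ⟨hx', ?_⟩
    field_simp
    linear_combination 2 * hv - 2 * ω * s * hx'
  · rintro ⟨rfl, rfl⟩
    constructor
    · field_simp
      linear_combination -L * hcs
    · field_simp
      ring

lemma Real.sinh_div_cosh_sub_one {θ : ℝ} (hθ : θ ≠ 0) :
    sinh θ / (cosh θ - 1) = (exp θ + 1) / (exp θ - 1) := by
  have hc : cosh θ - 1 ≠ 0 := (sub_pos.mpr (one_lt_cosh.mpr hθ)).ne'
  have he : exp θ - 1 ≠ 0 := sub_ne_zero.mpr (mt (exp_eq_one_iff θ).mp hθ)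
  rw [div_eq_div_iff hc he, ← cosh_add_sinh]
  linear_combination -cosh_sq_sub_sinh_sq θ

/-- the vector `x₀* = (−L*/2, (ωL*/2)(e^{ωT*}+1)/(e^{ωT*}−1))` is the
unique fixed point of the discrete step-to-step walking map
`(x,v) ↦ A(ω,T*)·(x,v) + b·L*` with `b = (−1,0)ᵀ`. -/
theorem stmt1 (ω T L : ℝ) (hω : 0 < ω) (hT : 0 < T)
    (A11 A12 A21 A22 : ℝ)
    (hA11 : A11 = Real.cosh (ω * T)) (hA12 : A12 = Real.sinh (ω * T) / ω)
    (hA21 : A21 = ω * Real.sinh (ω * T)) (hA22 : A22 = Real.cosh (ω * T))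
    (f : ℝ × ℝ → ℝ × ℝ)
    (hf : f = fun p => (A11 * p.1 + A12 * p.2 - L, A21 * p.1 + A22 * p.2))
    (xstar : ℝ × ℝ)
    (hxstar : xstar = (-L / 2,
      (ω * L / 2) * ((Real.exp (ω * T) + 1) / (Real.exp (ω * T) - 1)))) :
    f xstar = xstar ∧ ∀ y : ℝ × ℝ, f y = y → y = xstar := by
  have hθ : ω * T ≠ 0 := (mul_pos hω hT).ne'
  have fixed_iff (y : ℝ × ℝ) : f y = y ↔ y = xstar := by
    subst hA11 hA12 hA21 hA22 hf hxstar
    rw [Prod.ext_iff, Prod.ext_iff, ← sinh_div_cosh_sub_one hθ]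
    exact walking_step_fixed_iff hω.ne' (cosh_sq_sub_sinh_sq _) (one_lt_cosh.mpr hθ).ne' _ _
  exact ⟨(fixed_iff xstar).mpr rfl, fun y => (fixed_iff y).mp⟩
end

section
/- Let ω > 0, T > 0 and (x₀, v₀) ∈ ℝ² with (x₀, v₀) ≠ (0, 0), and let x(t) = cosh(ωt)·x₀ + (sinh(ωt)/ω)·v₀. Then there exists t ∈ (0, T) with ẋ(t) = 0 if and only if v₀·(cosh(ωT)·v₀ + ω·sinh(ωT)·x₀) < 0 (equivalently, v₀·(v₀ + (A₂₁/A₂₂)x₀) < 0 for the transition matrix A(ω,T)). -/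
private lemma key5 (ω T A B : ℝ) (hω : 0 < ω) (hT : 0 < T) (hAB : A ≠ 0 ∨ B ≠ 0) :
    (∃ t ∈ Set.Ioo (0:ℝ) T, A * Real.exp (2*ω*t) + B = 0) ↔
      (A + B) * (A * Real.exp (2*ω*T) + B) < 0 := by
  constructor
  · rintro ⟨t, ⟨ht0, htT⟩, hz⟩
    have e1 : 1 < Real.exp (2*ω*t) := by
      have h0 : (0:ℝ) < 2*ω*t := by positivity
      simpa using Real.exp_lt_exp.mpr h0
    have e2 : Real.exp (2*ω*t) < Real.exp (2*ω*T) := Real.exp_lt_exp.mpr (by nlinarith)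
    rcases lt_trichotomy A 0 with hA | hA | hA
    · have hp : 0 < A + B := by nlinarith
      have hn : A * Real.exp (2*ω*T) + B < 0 := by nlinarith
      exact mul_neg_of_pos_of_neg hp hn
    · subst hA
      simp only [zero_mul, zero_add] at hz
      subst hz
      simp at hAB
    · have hp : A + B < 0 := by nlinarith
      have hn : 0 < A * Real.exp (2*ω*T) + B := by nlinarith
      exact mul_neg_of_neg_of_pos hp hn
  · intro hlt
    set h : ℝ → ℝ := fun t => A * Real.exp (2*ω*t) + B with hh
    have hc : ContinuousOn h (Set.Icc 0 T) := by fun_prop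
    have h0' : h 0 = A + B := by simp [hh]
    have hT' : h T = A * Real.exp (2*ω*T) + B := rfl
    rcases mul_neg_iff.mp hlt with ⟨h1, h2⟩ | ⟨h1, h2⟩
    · have hmem : (0:ℝ) ∈ Set.Ioo (h T) (h 0) := by
        rw [h0', hT']; exact ⟨h2, h1⟩
      obtain ⟨t, ht, htz⟩ := intermediate_value_Ioo' hT.le hc hmem
      exact ⟨t, ht, htz⟩
    · have hmem : (0:ℝ) ∈ Set.Ioo (h 0) (h T) := by
        rw [h0', hT']; exact ⟨h1, h2⟩
      obtain ⟨t, ht, htz⟩ := intermediate_value_Ioo hT.le hc hmem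
      exact ⟨t, ht, htz⟩

/-- the single-support solution has an interior stationary point in `(0,T)`
iff `v₀·(cosh(ωT)v₀ + ω·sinh(ωT)x₀) < 0`. -/
theorem stmt5 (ω T x₀ v₀ : ℝ) (hω : 0 < ω) (hT : 0 < T)
    (h : (x₀, v₀) ≠ ((0 : ℝ), (0 : ℝ)))
    (x : ℝ → ℝ) (hx : x = fun t => Real.cosh (ω * t) * x₀ + (Real.sinh (ω * t) / ω) * v₀) :
    (∃ t ∈ Set.Ioo (0 : ℝ) T, deriv x t = 0) ↔
      v₀ * (Real.cosh (ω * T) * v₀ + ω * Real.sinh (ω * T) * x₀) < 0 := by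
  have hωne : ω ≠ 0 := hω.ne'
  set A : ℝ := (ω * x₀ + v₀) / 2 with hA
  set B : ℝ := (v₀ - ω * x₀) / 2 with hB
  -- identity: the derivative expression equals exp(-(ωt)) * (A e^{2ωt} + B)
  have hid : ∀ t : ℝ, ω * Real.sinh (ω*t) * x₀ + Real.cosh (ω*t) * v₀
      = Real.exp (-(ω*t)) * (A * Real.exp (2*ω*t) + B) := by
    intro t
    have e1 : Real.exp (2*ω*t) = Real.exp (ω*t) * Real.exp (ω*t) := by
      rw [← Real.exp_add]; ring_nf
    have hne : Real.exp (ω*t) ≠ 0 := (Real.exp_pos _).ne'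
    rw [Real.sinh_eq, Real.cosh_eq, Real.exp_neg, e1, hA, hB]
    field_simp
    ring
  -- computing the derivative
  have hd : ∀ t : ℝ, deriv x t = ω * Real.sinh (ω*t) * x₀ + Real.cosh (ω*t) * v₀ := by
    intro t
    have h1 : HasDerivAt (fun s : ℝ => ω * s) ω t := by
      simpa using (hasDerivAt_id t).const_mul ω
    have h2 : HasDerivAt (fun s => Real.cosh (ω*s)) (Real.sinh (ω*t) * ω) t :=
      (Real.hasDerivAt_cosh (ω*t)).comp t h1
    have h3 : HasDerivAt (fun s => Real.sinh (ω*s)) (Real.cosh (ω*t) * ω) t :=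
      (Real.hasDerivAt_sinh (ω*t)).comp t h1
    have h4 : HasDerivAt x (Real.sinh (ω*t) * ω * x₀ + Real.cosh (ω*t) * ω / ω * v₀) t := by
      rw [hx]
      exact (h2.mul_const x₀).add ((h3.div_const ω).mul_const v₀)
    rw [h4.deriv, mul_div_assoc, div_self hωne, mul_one]
    ring
  have hAB : A ≠ 0 ∨ B ≠ 0 := by
    by_contra hcon
    push_neg at hcon
    obtain ⟨hA0, hB0⟩ := hcon
    apply h
    rw [hA] at hA0
    rw [hB] at hB0
    have hx0 : x₀ = 0 := by
      have hωx : ω * x₀ = 0 := by linarith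
      exact (mul_eq_zero.mp hωx).resolve_left hωne
    have hv0 : v₀ = 0 := by linarith
    rw [hx0, hv0]
  have hiff : ∀ t : ℝ, deriv x t = 0 ↔ A * Real.exp (2*ω*t) + B = 0 := by
    intro t
    rw [hd t, hid t]
    constructor
    · intro hz
      rcases mul_eq_zero.mp hz with h' | h'
      · exact absurd h' (Real.exp_ne_zero _)
      · exact h'
    · intro hz
      rw [hz, mul_zero]
  simp only [hiff]
  rw [key5 ω T A B hω hT hAB]
  -- relate the two right-hand sides
  have hv : v₀ = A + B := by rw [hA, hB]; ring
  have hT2 := hid T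
  have hre : v₀ * (Real.cosh (ω*T) * v₀ + ω * Real.sinh (ω*T) * x₀)
      = Real.exp (-(ω*T)) * ((A + B) * (A * Real.exp (2*ω*T) + B)) := by
    rw [show Real.cosh (ω*T) * v₀ + ω * Real.sinh (ω*T) * x₀
          = ω * Real.sinh (ω*T) * x₀ + Real.cosh (ω*T) * v₀ from by ring, hT2, hv]
    ring
  rw [hre]
  have hep := Real.exp_pos (-(ω*T))
  constructor
  · intro hl
    exact mul_neg_of_pos_of_neg hep hl
  · intro hl
    by_contra hge
    push_neg at hge
    exact absurd hl (not_lt.mpr (mul_nonneg hep.le hge))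
end

section
/- Let ω > 0, T > 0 and c > 0 (the slipping threshold μh). With S₀, S_T, S_m, R_m defined as below, the safe region satisfies the set identity (S₀ ∩ S_T ∩ S_m ∩ R_m) ∪ (S₀ ∩ S_T ∩ R_mᶜ) = S₀ ∩ S_T; equivalently, S₀ ∩ S_T ∩ R_m ⊆ S_m. -/
/-- the safe region satisfies
`(S₀ ∩ S_T ∩ S_m ∩ R_m) ∪ (S₀ ∩ S_T ∩ R_mᶜ) = S₀ ∩ S_T`;
equivalently `S₀ ∩ S_T ∩ R_m ⊆ S_m`. -/
theorem stmt6 (ω T c : ℝ) (hω : 0 < ω) (hT : 0 < T) (hc : 0 < c)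
    (A11 A12 A21 A22 : ℝ)
    (hA11 : A11 = Real.cosh (ω * T)) (hA12 : A12 = Real.sinh (ω * T) / ω)
    (hA21 : A21 = ω * Real.sinh (ω * T)) (hA22 : A22 = Real.cosh (ω * T))
    (S0 ST Sm Rm : Set (ℝ × ℝ))
    (hS0 : S0 = {p | |p.1| < c})
    (hST : ST = {p | |A11 * p.1 + A12 * p.2| < c})
    (hSm : Sm = {p | 0 < ω ^ 2 * p.1 ^ 2 - p.2 ^ 2 ∧ ω ^ 2 * p.1 ^ 2 - p.2 ^ 2 < (ω * c) ^ 2})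
    (hRm : Rm = {p | p.2 * (p.2 + (A21 / A22) * p.1) < 0}) :
    (S0 ∩ ST ∩ Sm ∩ Rm) ∪ (S0 ∩ ST ∩ Rmᶜ) = S0 ∩ ST ∧
    S0 ∩ ST ∩ Rm ⊆ Sm := by
  have hch : 0 < Real.cosh (ω * T) := Real.cosh_pos _
  have hs : 0 < Real.sinh (ω * T) := by
    rw [← Real.sinh_zero]
    exact Real.sinh_lt_sinh.2 (by positivity)
  have hsc : Real.sinh (ω * T) < Real.cosh (ω * T) := Real.sinh_lt_cosh _
  set k : ℝ := A21 / A22 with hk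
  have hk0 : 0 < k := by rw [hk, hA21, hA22]; positivity
  have hkω : k < ω := by
    rw [hk, hA21, hA22, div_lt_iff₀ hch]
    nlinarith
  have key : ∀ p : ℝ × ℝ, p ∈ S0 → p ∈ Rm → p ∈ Sm := by
    rintro ⟨x, v⟩ h0 hr
    rw [hS0] at h0; rw [hRm] at hr; rw [hSm]
    simp only [Set.mem_setOf_eq] at *
    obtain ⟨hx1, hx2⟩ := abs_lt.mp h0
    have hv2 : v ^ 2 < k ^ 2 * x ^ 2 := by nlinarith [sq_nonneg (v + k * x)]
    have hk2 : k ^ 2 < ω ^ 2 := by nlinarith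
    have hvω : v ^ 2 < ω ^ 2 * x ^ 2 := by
      nlinarith [mul_le_mul_of_nonneg_right hk2.le (sq_nonneg x)]
    have hvne : v ≠ 0 := by
      intro h; rw [h] at hr; nlinarith
    constructor
    · nlinarith
    · have hv0 : 0 < v ^ 2 := by positivity
      have hxc : x ^ 2 < c ^ 2 := by nlinarith
      nlinarith [mul_lt_mul_of_pos_left hxc (pow_pos hω 2)]
  constructor
  · ext p
    simp only [Set.mem_union, Set.mem_inter_iff, Set.mem_compl_iff]
    constructor
    · rintro (⟨⟨⟨h0, hT'⟩, _⟩, _⟩ | ⟨⟨h0, hT'⟩, _⟩) <;> exact ⟨h0, hT'⟩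
    · rintro ⟨h0, hT'⟩
      by_cases hr : p ∈ Rm
      · exact Or.inl ⟨⟨⟨h0, hT'⟩, key p h0 hr⟩, hr⟩
      · exact Or.inr ⟨⟨h0, hT'⟩, hr⟩
  · rintro p ⟨⟨h0, _⟩, hr⟩
    exact key p h0 hr
end

section
/- Let ω > 0, T > 0 and c > 0 (the slipping threshold μh), and let x(t) = cosh(ωt)·x₀ + (sinh(ωt)/ω)·v₀ be the single-support solution with initial data (x₀, v₀) ∈ ℝ². Then |x(t)| < c for all t ∈ [0, T] if and only if |x₀| < c and |cosh(ωT)·x₀ + (sinh(ωT)/ω)·v₀| < c; i.e., the non-slipping condition max_{0≤t≤T}|x(t)| < μh holds precisely when the initial state lies in the safe region S = S₀ ∩ S_T. -/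
/-- the non-slipping condition `max_{0≤t≤T} |x(t)| < c` holds iff the
initial state lies in `S = S₀ ∩ S_T`, i.e. `|x₀| < c` and `|cosh(ωT)x₀ + (sinh(ωT)/ω)v₀| < c`. -/
theorem stmt7 (ω T c x₀ v₀ : ℝ) (hω : 0 < ω) (hT : 0 < T) (hc : 0 < c)
    (x : ℝ → ℝ) (hx : x = fun t => Real.cosh (ω * t) * x₀ + (Real.sinh (ω * t) / ω) * v₀) :
    (∀ t ∈ Set.Icc (0 : ℝ) T, |x t| < c) ↔
      (|x₀| < c ∧ |Real.cosh (ω * T) * x₀ + (Real.sinh (ω * T) / ω) * v₀| < c) := by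
  subst hx
  constructor
  · intro h
    refine ⟨?_, ?_⟩
    · have := h 0 ⟨le_refl 0, hT.le⟩
      simpa using this
    · have := h T ⟨hT.le, le_refl T⟩
      simpa using this
  · rintro ⟨h0, hTc⟩ t ⟨ht0, htT⟩
    rcases eq_or_lt_of_le ht0 with rfl | ht0'
    · simpa using h0
    set xT : ℝ := Real.cosh (ω * T) * x₀ + Real.sinh (ω * T) / ω * v₀ with hxT
    set a : ℝ := Real.sinh (ω * (T - t)) with ha
    set b : ℝ := Real.sinh (ω * t) with hb
    set s : ℝ := Real.sinh (ω * T) with hs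
    have hωne : ω ≠ 0 := ne_of_gt hω
    have hspos : 0 < s := Real.sinh_pos_iff.2 (by positivity)
    have hbpos : 0 < b := Real.sinh_pos_iff.2 (by positivity)
    have hanonneg : 0 ≤ a := Real.sinh_nonneg_iff.2 (by nlinarith)
    -- superadditivity: a + b ≤ s
    have hab : a + b ≤ s := by
      have h1 : s = a * Real.cosh (ω * t) + Real.cosh (ω * (T - t)) * b := by
        rw [ha, hb, hs]
        rw [show ω * T = ω * (T - t) + ω * t by ring, Real.sinh_add]
      have c1 : 1 ≤ Real.cosh (ω * t) := Real.one_le_cosh _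
      have c2 : 1 ≤ Real.cosh (ω * (T - t)) := Real.one_le_cosh _
      nlinarith [hbpos.le, hanonneg]
    -- interpolation identity
    have hid : s * (Real.cosh (ω * t) * x₀ + Real.sinh (ω * t) / ω * v₀)
        = a * x₀ + b * xT := by
      rw [ha, hb, hs, hxT, mul_sub, Real.sinh_sub]
      field_simp
      ring
    have habs : |Real.cosh (ω * t) * x₀ + Real.sinh (ω * t) / ω * v₀| * s
        ≤ a * |x₀| + b * |xT| := by
      have : |s * (Real.cosh (ω * t) * x₀ + Real.sinh (ω * t) / ω * v₀)|
          ≤ a * |x₀| + b * |xT| := by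
        rw [hid]
        calc |a * x₀ + b * xT| ≤ |a * x₀| + |b * xT| := abs_add_le _ _
        _ = a * |x₀| + b * |xT| := by
            rw [abs_mul, abs_mul, abs_of_nonneg hanonneg, abs_of_pos hbpos]
      rw [abs_mul, abs_of_pos hspos] at this
      linarith
    have h1 : a * |x₀| ≤ a * c := mul_le_mul_of_nonneg_left h0.le hanonneg
    have h2 : b * |xT| < b * c := (mul_lt_mul_iff_right₀ hbpos).2 hTc
    have habs0 : 0 ≤ |Real.cosh (ω * t) * x₀ + Real.sinh (ω * t) / ω * v₀| := abs_nonneg _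
    nlinarith [hab, hspos, hc]
end

section
/- Let ω > 0, T > 0, c > 0, (x₀, ẋ₀) ∈ ℝ² and L ∈ ℝ, and let (x₀', ẋ₀') = A(ω,T)·(x₀, ẋ₀)ᵀ + b·L be the next footstep initial state. Then |A₁₁x₀' + A₁₂ẋ₀'| < c if and only if L lies in the open interval ((2A₁₁ − 1/A₁₁)x₀ + 2A₁₂ẋ₀ − c/A₁₁, (2A₁₁ − 1/A₁₁)x₀ + 2A₁₂ẋ₀ + c/A₁₁). -/
/-! Writing `K` for the centre of the claimed interval, the slipping quantity of the next state
is `A₁₁ (K - L)`: expanding it, the coefficient of `x₀` is `A₁₁² + A₁₂A₂₁ = 2A₁₁² - 1` because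
`A(ω,T)` has determinant `cosh² - sinh² = 1`. Since `A₁₁ = cosh(ωT) > 0`, the condition
`|A₁₁ (K - L)| < c` says exactly that `L` lies within `c / A₁₁` of `K`. -/

open Real Set

lemma cosh_mul_cosh_sub_sinh_div_mul_mul_sinh {ω : ℝ} (hω : ω ≠ 0) (t : ℝ) :
    cosh t * cosh t - sinh t / ω * (ω * sinh t) = 1 := by
  rw [show sinh t / ω * (ω * sinh t) = sinh t ^ 2 by field_simp, ← sq, cosh_sq_sub_sinh_sq]

lemma next_state_combination {a b c x v L : ℝ} (ha : a ≠ 0) (hdet : a * a - b * c = 1) :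
    a * (a * x + b * v - L) + b * (c * x + a * v) = a * ((2 * a - 1 / a) * x + 2 * b * v - L) := by
  field_simp
  linear_combination (-x) * hdet

lemma abs_mul_sub_lt_iff_mem_Ioo {a K L c : ℝ} (ha : 0 < a) :
    |a * (K - L)| < c ↔ L ∈ Ioo (K - c / a) (K + c / a) := by
  rw [← Real.ball_eq_Ioo, Metric.mem_ball, Real.dist_eq, abs_sub_comm, abs_mul, abs_of_pos ha,
    lt_div_iff₀' ha]

theorem stmt9_general (ω T c x₀ v₀ L : ℝ) (hω : 0 < ω)
    (A11 A12 A21 A22 : ℝ)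
    (hA11 : A11 = Real.cosh (ω * T)) (hA12 : A12 = Real.sinh (ω * T) / ω)
    (hA21 : A21 = ω * Real.sinh (ω * T)) (hA22 : A22 = Real.cosh (ω * T))
    (x₀' v₀' : ℝ)
    (hx' : x₀' = A11 * x₀ + A12 * v₀ - L)
    (hv' : v₀' = A21 * x₀ + A22 * v₀) :
    |A11 * x₀' + A12 * v₀'| < c ↔
      L ∈ Set.Ioo ((2 * A11 - 1 / A11) * x₀ + 2 * A12 * v₀ - c / A11)
                  ((2 * A11 - 1 / A11) * x₀ + 2 * A12 * v₀ + c / A11) := by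
  have hA11_pos : 0 < A11 := hA11 ▸ cosh_pos _
  have hdet : A11 * A11 - A12 * A21 = 1 := by
    rw [hA11, hA12, hA21]
    exact cosh_mul_cosh_sub_sinh_div_mul_mul_sinh hω.ne' _
  rw [hx', hv', hA22, ← hA11, next_state_combination hA11_pos.ne' hdet]
  exact abs_mul_sub_lt_iff_mem_Ioo hA11_pos

/-- the next footstep initial state
`(x₀', v₀') = A(ω,T)·(x₀,v₀) + b·L` satisfies `|A₁₁x₀' + A₁₂v₀'| < c` iff
`L ∈ ((2A₁₁ − 1/A₁₁)x₀ + 2A₁₂v₀ − c/A₁₁, (2A₁₁ − 1/A₁₁)x₀ + 2A₁₂v₀ + c/A₁₁)`. -/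
theorem stmt9 (ω T c x₀ v₀ L : ℝ) (hω : 0 < ω) (hT : 0 < T) (hc : 0 < c)
    (A11 A12 A21 A22 : ℝ)
    (hA11 : A11 = Real.cosh (ω * T)) (hA12 : A12 = Real.sinh (ω * T) / ω)
    (hA21 : A21 = ω * Real.sinh (ω * T)) (hA22 : A22 = Real.cosh (ω * T))
    (x₀' v₀' : ℝ)
    (hx' : x₀' = A11 * x₀ + A12 * v₀ - L)
    (hv' : v₀' = A21 * x₀ + A22 * v₀) :
    |A11 * x₀' + A12 * v₀'| < c ↔
      L ∈ Set.Ioo ((2 * A11 - 1 / A11) * x₀ + 2 * A12 * v₀ - c / A11)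
                  ((2 * A11 - 1 / A11) * x₀ + 2 * A12 * v₀ + c / A11) :=
  stmt9_general ω T c x₀ v₀ L hω A11 A12 A21 A22 hA11 hA12 hA21 hA22 x₀' v₀' hx' hv'
end

section
/- Let ω > 0, T > 0, c > 0, and (x₀, ẋ₀) ∈ S = S₀ ∩ S_T. If the step length L lies in the open interval (L_l^s, L_u^s) = (max(L_l⁰, L_l^T), min(L_u⁰, L_u^T)) computed at (x₀, ẋ₀), then the next footstep initial state A(ω,T)·(x₀, ẋ₀)ᵀ + b·L again lies in S; hence no slippage occurs during the next step. -/
/-- if the current state is in the safe region `S = S₀ ∩ S_T` and the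
step length is chosen in the safe range `(max(L_l⁰, L_l^T), min(L_u⁰, L_u^T))`, then the
next footstep initial state again lies in `S`. -/
theorem stmt10 (ω T c x₀ v₀ L : ℝ) (hω : 0 < ω) (hT : 0 < T) (hc : 0 < c)
    (A11 A12 A21 A22 : ℝ)
    (hA11 : A11 = Real.cosh (ω * T)) (hA12 : A12 = Real.sinh (ω * T) / ω)
    (hA21 : A21 = ω * Real.sinh (ω * T)) (hA22 : A22 = Real.cosh (ω * T))
    (hS0 : |x₀| < c) (hST : |A11 * x₀ + A12 * v₀| < c)
    (hL : L ∈ Set.Ioo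
      (max (A11 * x₀ + A12 * v₀ - c) ((2 * A11 - 1 / A11) * x₀ + 2 * A12 * v₀ - c / A11))
      (min (A11 * x₀ + A12 * v₀ + c) ((2 * A11 - 1 / A11) * x₀ + 2 * A12 * v₀ + c / A11)))
    (x₀' v₀' : ℝ)
    (hx' : x₀' = A11 * x₀ + A12 * v₀ - L)
    (hv' : v₀' = A21 * x₀ + A22 * v₀) :
    |x₀'| < c ∧ |A11 * x₀' + A12 * v₀'| < c := by
  obtain ⟨hl, hu⟩ := hL
  have hl1 : A11 * x₀ + A12 * v₀ - c < L := lt_of_le_of_lt (le_max_left _ _) hl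
  have hl2 : (2 * A11 - 1 / A11) * x₀ + 2 * A12 * v₀ - c / A11 < L :=
    lt_of_le_of_lt (le_max_right _ _) hl
  have hu1 : L < A11 * x₀ + A12 * v₀ + c := lt_of_lt_of_le hu (min_le_left _ _)
  have hu2 : L < (2 * A11 - 1 / A11) * x₀ + 2 * A12 * v₀ + c / A11 :=
    lt_of_lt_of_le hu (min_le_right _ _)
  have hA11pos : 0 < A11 := by
    rw [hA11]; positivity
  have hA11ne : A11 ≠ 0 := ne_of_gt hA11pos
  have hid : A12 * A21 = A11 ^ 2 - 1 := by
    rw [hA11, hA12, hA21]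
    field_simp
    have := Real.cosh_sq_sub_sinh_sq (ω * T)
    ring_nf
    nlinarith [this]
  constructor
  · rw [hx', abs_lt]; constructor <;> linarith
  · have key : A11 * x₀' + A12 * v₀' =
        A11 * ((2 * A11 - 1 / A11) * x₀ + 2 * A12 * v₀ - L) := by
      rw [hx', hv', hA22]
      rw [hA11] at hid ⊢
      field_simp
      linear_combination x₀ * hid
    rw [key, abs_mul, abs_of_pos hA11pos]
    have habs : |(2 * A11 - 1 / A11) * x₀ + 2 * A12 * v₀ - L| < c / A11 := by
      rw [abs_lt]; constructor <;> linarith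
    calc A11 * |(2 * A11 - 1 / A11) * x₀ + 2 * A12 * v₀ - L|
        < A11 * (c / A11) := by exact (mul_lt_mul_iff_right₀ hA11pos).mpr habs
      _ = c := by field_simp
end

section
/- (Proposition 1.) Let ω > 0, T > 0, c > 0. If (x₀, ẋ₀) ∈ S = S₀ ∩ S_T and L ∈ (L_l^s, L_u^s) computed at (x₀, ẋ₀), then the safe step-length range at the next footstep initial state (x₀', ẋ₀') = A(ω,T)·(x₀, ẋ₀)ᵀ + b·L is nonempty, i.e. L_l^s(x₀', ẋ₀') < L_u^s(x₀', ẋ₀'). -/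
/-- Proposition 1: if `(x₀,v₀) ∈ S` and `L` is in the safe range at
`(x₀,v₀)`, then the safe range at the next footstep initial state is nonempty. -/
theorem stmt11 (ω T c x₀ v₀ L : ℝ) (hω : 0 < ω) (hT : 0 < T) (hc : 0 < c)
    (A11 A12 A21 A22 : ℝ)
    (hA11 : A11 = Real.cosh (ω * T)) (hA12 : A12 = Real.sinh (ω * T) / ω)
    (hA21 : A21 = ω * Real.sinh (ω * T)) (hA22 : A22 = Real.cosh (ω * T))
    (hS0 : |x₀| < c) (hST : |A11 * x₀ + A12 * v₀| < c)
    (hL : L ∈ Set.Ioo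
      (max (A11 * x₀ + A12 * v₀ - c) ((2 * A11 - 1 / A11) * x₀ + 2 * A12 * v₀ - c / A11))
      (min (A11 * x₀ + A12 * v₀ + c) ((2 * A11 - 1 / A11) * x₀ + 2 * A12 * v₀ + c / A11)))
    (x₀' v₀' : ℝ)
    (hx' : x₀' = A11 * x₀ + A12 * v₀ - L)
    (hv' : v₀' = A21 * x₀ + A22 * v₀) :
    max (A11 * x₀' + A12 * v₀' - c) ((2 * A11 - 1 / A11) * x₀' + 2 * A12 * v₀' - c / A11)
      < min (A11 * x₀' + A12 * v₀' + c) ((2 * A11 - 1 / A11) * x₀' + 2 * A12 * v₀' + c / A11) := by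
  obtain ⟨hl, hu⟩ := hL
  have hl1 := lt_of_le_of_lt (le_max_left _ _) hl
  have hl2 := lt_of_le_of_lt (le_max_right _ _) hl
  have hu1 := lt_of_lt_of_le hu (min_le_left _ _)
  have hu2 := lt_of_lt_of_le hu (min_le_right _ _)
  have h1 : (1:ℝ) ≤ A11 := by rw [hA11]; exact Real.one_le_cosh _
  have hA11pos : (0:ℝ) < A11 := lt_of_lt_of_le one_pos h1
  have hA11ne : A11 ≠ 0 := ne_of_gt hA11pos
  have hid : A12 * A21 = A11 ^ 2 - 1 := by
    rw [hA12, hA21, hA11]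
    field_simp
    nlinarith [Real.cosh_sq_sub_sinh_sq (ω * T)]
  have hx0' : |x₀'| < c := by
    rw [abs_lt, hx']; constructor <;> linarith
  have hkey : A11 * x₀' + A12 * v₀' = A11 * (((2 * A11 - 1 / A11) * x₀ + 2 * A12 * v₀) - L) := by
    rw [hx', hv', hA22, ← hA11]
    field_simp
    linear_combination x₀ * hid
  have hP : |A11 * x₀' + A12 * v₀'| < c := by
    rw [abs_lt, hkey]
    constructor
    · have h2 : ((2 * A11 - 1 / A11) * x₀ + 2 * A12 * v₀) - L > -(c / A11) := by linarith
      calc -c = A11 * (-(c/A11)) := by field_simp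
        _ < _ := mul_lt_mul_of_pos_left h2 hA11pos
    · have h2 : ((2 * A11 - 1 / A11) * x₀ + 2 * A12 * v₀) - L < c / A11 := by linarith
      calc A11 * (((2 * A11 - 1 / A11) * x₀ + 2 * A12 * v₀) - L) < A11 * (c / A11) :=
            mul_lt_mul_of_pos_left h2 hA11pos
        _ = c := by field_simp
  rw [abs_lt] at hP hx0'
  have hrel : (2 * A11 - 1 / A11) * x₀' + 2 * A12 * v₀'
      = 2 * (A11 * x₀' + A12 * v₀') - x₀' / A11 := by field_simp; ring
  have hcpos : 0 < c / A11 := div_pos hc hA11pos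
  have hd1 : x₀' / A11 < c / A11 := div_lt_div_of_pos_right hx0'.2 hA11pos
  have hd2 : -(c / A11) < x₀' / A11 := by
    have := div_lt_div_of_pos_right hx0'.1 hA11pos
    rwa [neg_div] at this
  have hle : c / A11 ≤ c := by
    rw [div_le_iff₀ hA11pos]; nlinarith
  apply max_lt <;> apply lt_min
  · linarith [hP.1, hP.2]
  · rw [hrel]; linarith [hP.1, hP.2]
  · rw [hrel]; linarith [hP.1, hP.2]
  · rw [hrel]; linarith [hP.1, hP.2]
end

section
/- Let ω > 0, T > 0, c > 0 and (x₀, ẋ₀) ∈ ℝ². If |x₀| < c and |A₁₁x₀ + A₁₂ẋ₀| < c (i.e. (x₀, ẋ₀) lies in the safe region S = S₀ ∩ S_T), then |A₂₁x₀ + A₂₂ẋ₀| < ((A₁₁ + 1)/A₁₂)·c. -/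
/-!
The flow matrix `A` has determinant `cosh² - sinh² = 1`, so its second row is determined by its
first row and `x₀`: `A₁₂ (A₂₁ x₀ + A₂₂ ẋ₀) = A₂₂ (A₁₁ x₀ + A₁₂ ẋ₀) - x₀`. The triangle inequality
and the two safety bounds then give the estimate, using `A₁₁ = A₂₂`.
-/

theorem abs_lower_row_lt_of_det_eq_one {a b c d x v r : ℝ} (hdet : a * d - b * c = 1)
    (hb : 0 < b) (hd : 0 ≤ d) (hx : |x| < r) (hy : |a * x + b * v| < r) :
    |c * x + d * v| < (d + 1) / b * r := by
  have hrow : c * x + d * v = (d * (a * x + b * v) - x) / b := by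
    field_simp
    linear_combination (-x) * hdet
  calc |c * x + d * v| = |d * (a * x + b * v) - x| / b := by
        rw [hrow, abs_div, abs_of_pos hb]
    _ ≤ (d * |a * x + b * v| + |x|) / b := by
        gcongr
        calc |d * (a * x + b * v) - x| ≤ |d * (a * x + b * v)| + |x| := abs_sub _ _
          _ = d * |a * x + b * v| + |x| := by rw [abs_mul, abs_of_nonneg hd]
    _ < (d * r + r) / b := by
        gcongr ?_ / b
        exact add_lt_add_of_le_of_lt (by gcongr) hx
    _ = (d + 1) / b * r := by ring

theorem stmt12_general (ω T c x₀ v₀ : ℝ) (hω : 0 < ω) (hT : 0 < T)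
    (A11 A12 A21 A22 : ℝ)
    (hA11 : A11 = Real.cosh (ω * T)) (hA12 : A12 = Real.sinh (ω * T) / ω)
    (hA21 : A21 = ω * Real.sinh (ω * T)) (hA22 : A22 = Real.cosh (ω * T))
    (hS0 : |x₀| < c) (hST : |A11 * x₀ + A12 * v₀| < c) :
    |A21 * x₀ + A22 * v₀| < ((A11 + 1) / A12) * c := by
  have hdet : A11 * A22 - A12 * A21 = 1 := by
    subst hA11 hA12 hA21 hA22
    field_simp
    exact Real.cosh_sq_sub_sinh_sq _
  have hA12_pos : 0 < A12 := by
    rw [hA12]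
    exact div_pos (Real.sinh_pos_iff.2 (mul_pos hω hT)) hω
  have hA22_nonneg : 0 ≤ A22 := hA22 ▸ (Real.cosh_pos _).le
  rw [hA11, ← hA22]
  exact abs_lower_row_lt_of_det_eq_one hdet hA12_pos hA22_nonneg hS0 hST

/-- if `(x₀,v₀)` lies in the safe region (`|x₀| < c` and
`|A₁₁x₀ + A₁₂v₀| < c`), then `|A₂₁x₀ + A₂₂v₀| < ((A₁₁+1)/A₁₂)·c`. -/
theorem stmt12 (ω T c x₀ v₀ : ℝ) (hω : 0 < ω) (hT : 0 < T) (hc : 0 < c)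
    (A11 A12 A21 A22 : ℝ)
    (hA11 : A11 = Real.cosh (ω * T)) (hA12 : A12 = Real.sinh (ω * T) / ω)
    (hA21 : A21 = ω * Real.sinh (ω * T)) (hA22 : A22 = Real.cosh (ω * T))
    (hS0 : |x₀| < c) (hST : |A11 * x₀ + A12 * v₀| < c) :
    |A21 * x₀ + A22 * v₀| < ((A11 + 1) / A12) * c :=
  stmt12_general ω T c x₀ v₀ hω hT A11 A12 A21 A22 hA11 hA12 hA21 hA22 hS0 hST
end

section
/- Let ω > 0, T > 0, c > 0 and (x₀, ẋ₀) ∈ ℝ². The safe step-length range at (x₀, ẋ₀) is nonempty, i.e. max(L_l⁰, L_l^T) < min(L_u⁰, L_u^T), if and only if |A₂₁x₀ + A₂₂ẋ₀| < ((A₁₁ + 1)/A₁₂)·c. -/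
/-!
Both safe ranges are open intervals, `(s - c, s + c)` and `(t - c/A₁₁, t + c/A₁₁)`, so they meet
iff `|t - s| < c + c/A₁₁`. Since `A₁₁ = A₂₂` and `det A = cosh² - sinh² = 1`, the gap between the
centres is `t - s = (A₁₂/A₁₁)(A₂₁x₀ + A₂₂ẋ₀)`, and dividing by `A₁₂/A₁₁ > 0` gives the criterion.
-/

lemma max_sub_lt_min_add_iff {s t a b : ℝ} (ha : 0 < a) (hb : 0 < b) :
    max (s - a) (t - b) < min (s + a) (t + b) ↔ |t - s| < a + b := by
  rw [max_lt_iff, lt_min_iff, lt_min_iff, abs_lt]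
  constructor
  · rintro ⟨⟨-, hst⟩, hts, -⟩
    constructor <;> linarith
  · rintro ⟨hlo, hhi⟩
    exact ⟨⟨by linarith, by linarith⟩, by linarith, by linarith⟩

lemma sub_eq_div_mul_of_sq_sub_mul_eq_one {a b d : ℝ} (ha : a ≠ 0) (hdet : a ^ 2 - b * d = 1)
    (x v : ℝ) :
    ((2 * a - 1 / a) * x + 2 * b * v) - (a * x + b * v) = b / a * (d * x + a * v) := by
  field_simp
  linear_combination x * hdet

lemma cosh_sq_sub_sinh_div_mul_mul_sinh {ω : ℝ} (hω : ω ≠ 0) (u : ℝ) :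
    Real.cosh u ^ 2 - Real.sinh u / ω * (ω * Real.sinh u) = 1 := by
  field_simp
  linear_combination Real.cosh_sq_sub_sinh_sq u

/-- the safe step-length range at `(x₀,v₀)` is nonempty iff
`|A₂₁x₀ + A₂₂v₀| < ((A₁₁+1)/A₁₂)·c`. -/
theorem stmt13 (ω T c x₀ v₀ : ℝ) (hω : 0 < ω) (hT : 0 < T) (hc : 0 < c)
    (A11 A12 A21 A22 : ℝ)
    (hA11 : A11 = Real.cosh (ω * T)) (hA12 : A12 = Real.sinh (ω * T) / ω)
    (hA21 : A21 = ω * Real.sinh (ω * T)) (hA22 : A22 = Real.cosh (ω * T)) :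
    (max (A11 * x₀ + A12 * v₀ - c) ((2 * A11 - 1 / A11) * x₀ + 2 * A12 * v₀ - c / A11)
      < min (A11 * x₀ + A12 * v₀ + c) ((2 * A11 - 1 / A11) * x₀ + 2 * A12 * v₀ + c / A11))
    ↔ |A21 * x₀ + A22 * v₀| < ((A11 + 1) / A12) * c := by
  have hA11_pos : 0 < A11 := hA11 ▸ Real.cosh_pos _
  have hA12_pos : 0 < A12 :=
    hA12 ▸ div_pos (Real.sinh_pos_iff.mpr (mul_pos hω hT)) hω
  have hdet : A11 ^ 2 - A12 * A21 = 1 :=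
    hA11 ▸ hA12 ▸ hA21 ▸ cosh_sq_sub_sinh_div_mul_mul_sinh hω.ne' _
  have hratio : 0 < A12 / A11 := div_pos hA12_pos hA11_pos
  have hbound : c + c / A11 = A12 / A11 * ((A11 + 1) / A12 * c) := by
    field_simp
  rw [max_sub_lt_min_add_iff hc (div_pos hc hA11_pos),
    sub_eq_div_mul_of_sq_sub_mul_eq_one hA11_pos.ne' hdet, hA22, ← hA11, abs_mul,
    abs_of_pos hratio, hbound, mul_lt_mul_iff_right₀ hratio]
end

section
/- Let ω > 0, T > 0, let (Δx, Δv) ∈ ℝ², ΔL ∈ ℝ, and let (Δx', Δv') = A(ω,T)·(Δx, Δv)ᵀ + b·ΔL. Define V(y₁, y₂) = (A₂₁y₁ + A₂₂y₂)². Then V(Δx', Δv') − V(Δx, Δv) = A₂₁²·(ΔL − ΔL₁)·(ΔL − ΔL₂), where ΔL₁ = [(A₁₁A₂₁ + A₂₁A₂₂ + A₂₁)Δx + (A₁₂A₂₁ + A₂₂² + A₂₂)Δv]/A₂₁ and ΔL₂ = [(A₁₁A₂₁ + A₂₁A₂₂ − A₂₁)Δx + (A₁₂A₂₁ + A₂₂²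 − A₂₂)Δv]/A₂₁. -/
/-- with `V(y₁,y₂) = (A₂₁y₁ + A₂₂y₂)²` and
`(Δx',Δv') = A(ω,T)·(Δx,Δv) + b·ΔL`, one has
`V(Δx',Δv') − V(Δx,Δv) = A₂₁²(ΔL − ΔL₁)(ΔL − ΔL₂)`. -/
theorem stmt14 (ω T Δx Δv ΔL : ℝ) (hω : 0 < ω) (hT : 0 < T)
    (A11 A12 A21 A22 : ℝ)
    (hA11 : A11 = Real.cosh (ω * T)) (hA12 : A12 = Real.sinh (ω * T) / ω)
    (hA21 : A21 = ω * Real.sinh (ω * T)) (hA22 : A22 = Real.cosh (ω * T))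
    (Δx' Δv' : ℝ)
    (hΔx' : Δx' = A11 * Δx + A12 * Δv - ΔL)
    (hΔv' : Δv' = A21 * Δx + A22 * Δv)
    (V : ℝ → ℝ → ℝ) (hV : V = fun y₁ y₂ => (A21 * y₁ + A22 * y₂) ^ 2)
    (ΔL₁ ΔL₂ : ℝ)
    (hΔL₁ : ΔL₁ = ((A11 * A21 + A21 * A22 + A21) * Δx
      + (A12 * A21 + A22 ^ 2 + A22) * Δv) / A21)
    (hΔL₂ : ΔL₂ = ((A11 * A21 + A21 * A22 - A21) * Δx
      + (A12 * A21 + A22 ^ 2 - A22) * Δv) / A21) :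
    V Δx' Δv' - V Δx Δv = A21 ^ 2 * (ΔL - ΔL₁) * (ΔL - ΔL₂) := by
  have hs : 0 < Real.sinh (ω * T) := Real.sinh_pos_iff.2 (by positivity)
  have h21 : A21 ≠ 0 := by rw [hA21]; positivity
  have hch : A11 ^ 2 - A12 * A21 = 1 := by
    rw [hA11, hA12, hA21]
    field_simp
    nlinarith [Real.cosh_sq_sub_sinh_sq (ω * T)]
  subst hV hΔx' hΔv' hΔL₁ hΔL₂
  have h22 : A22 = A11 := hA22.trans hA11.symm
  subst h22
  field_simp
  nlinarith [sq_nonneg A21, hch]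
end

section
/- (Proposition 3.) Let ω > 0, T* > 0, c > 0 and L* ∈ ℝ, and let (x₀*, ẋ₀*) be the fixed point of the step map with step length L* and step time T*. Let (x₀, ẋ₀) ∈ ℝ² be a state for which the safe range is nonempty (max(L_l⁰, L_l^T) < min(L_u⁰, L_u^T)) and for which A₂₁(x₀ − x₀*) + A₂₂(ẋ₀ − ẋ₀*) ≠ 0. Then the open intervals (L_l^s, L_u^s) = (max(L_l⁰, L_l^T), min(L_u⁰, L_u^T)) and (min{ΔL₁, ΔL₂} + L*, max{ΔL₁, ΔL₂} + L*), with ΔL₁, ΔL₂ computed at (x₀ − x₀*, ẋ₀ − ẋ₀*), have nonempty intersection. -/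
/-!
Put `m = A₁₁x₀ + A₁₂ẋ₀`, let `t = (2A₁₁ − 1/A₁₁)x₀ + 2A₁₂ẋ₀` be the centre of the second safe
interval, and `a = ΔL₂ + L*`. Because `det A = 1`, `A₁₁ = A₂₂` and `(x₀*, ẋ₀*)` is the fixed
point of the step map, `A₁₁ t + m = (A₁₁ + 1) a`. Hence the second safe interval
`(t − c/A₁₁, t + c/A₁₁)` is the image of the first one, `(m − c, m + c)`, under the
orientation-reversing affine map `x ↦ ((A₁₁ + 1) a − x)/A₁₁`, which fixes `a`. An interval and its
image under such a map can only meet if both contain `a`, so `a` lies in the safe range. Since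
`ΔL₁ − ΔL₂ = 2(A₂₁Δx + A₂₂Δv)/A₂₁ ≠ 0`, the point `a` is an endpoint of a nondegenerate
convergence interval, which therefore meets the safe range.
-/

open Function Real Set

section StepMap

variable {K : Type*} [Field K]

def stepMap (A11 A12 A21 A22 L : K) (p : K × K) : K × K :=
  (A11 * p.1 + A12 * p.2 - L, A21 * p.1 + A22 * p.2)

variable {A11 A12 A21 A22 L xs vs : K}

lemma two_mul_fst_add_eq_zero_of_isFixedPt_stepMap (hA22 : A22 = A11)
    (hdet : A11 * A22 - A12 * A21 = 1) (hA11 : A11 ≠ 1)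
    (hfix : IsFixedPt (stepMap A11 A12 A21 A22 L) (xs, vs)) : 2 * xs + L = 0 := by
  simp only [IsFixedPt, stepMap, Prod.mk.injEq] at hfix
  obtain ⟨hx, hv⟩ := hfix
  subst A22
  have h : (A11 - 1) * (2 * xs + L) = 0 := by
    linear_combination (1 - A11) * hx + A12 * hv + xs * hdet
  exact (mul_eq_zero.1 h).resolve_left (sub_ne_zero.2 hA11)

lemma mul_center_add_eq_of_isFixedPt_stepMap (hA22 : A22 = A11) (hdet : A11 * A22 - A12 * A21 = 1)
    (hA11 : A11 ≠ 0) (hA11' : A11 ≠ 1) (hA21 : A21 ≠ 0)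
    (hfix : IsFixedPt (stepMap A11 A12 A21 A22 L) (xs, vs)) (x v : K) :
    A11 * ((2 * A11 - 1 / A11) * x + 2 * A12 * v) + (A11 * x + A12 * v) =
      (A11 + 1) * (((A11 * A21 + A21 * A22 - A21) * (x - xs)
        + (A12 * A21 + A22 ^ 2 - A22) * (v - vs)) / A21 + L) := by
  have hxs := two_mul_fst_add_eq_zero_of_isFixedPt_stepMap hA22 hdet hA11' hfix
  have hvs : vs = A21 * xs + A22 * vs := congrArg Prod.snd hfix.symm
  subst A22
  field_simp
  linear_combination (-A11 * v - (A11 + 1) * vs) * hdet - (A11 + 1) * A21 * hxs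
    - (A11 + 1) * (2 * A11 + 1) * hvs

end StepMap

lemma mem_Ioo_of_overlap_of_reflect {K : Type*} [Field K] [LinearOrder K] [IsStrictOrderedRing K]
    {h c m t a : K} (hh : 0 < h) (ht : h * t + m = (h + 1) * a)
    (hmeet : max (m - c) (t - c / h) < min (m + c) (t + c / h)) :
    a ∈ Ioo (max (m - c) (t - c / h)) (min (m + c) (t + c / h)) := by
  have h₁ : m - c < t + c / h := (le_max_left _ _).trans_lt (hmeet.trans_le (min_le_right _ _))
  have h₂ : t - c / h < m + c := (le_max_right _ _).trans_lt (hmeet.trans_le (min_le_left _ _))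
  have hcd : h * (c / h) = c := mul_div_cancel₀ c hh.ne'
  have hlo : m - c < a := by nlinarith
  have hhi : a < m + c := by nlinarith
  refine ⟨max_lt hlo ?_, lt_min hhi ?_⟩ <;> nlinarith

lemma Ioo_inter_Ioo_min_max_nonempty {α : Type*} [LinearOrder α] [DenselyOrdered α]
    {l u a b : α} (ha : a ∈ Ioo l u) (hab : a ≠ b) :
    (Ioo l u ∩ Ioo (min a b) (max a b)).Nonempty := by
  rw [Ioo_inter_Ioo, nonempty_Ioo]
  exact max_lt (lt_min (ha.1.trans ha.2) (ha.1.trans_le (le_max_left a b)))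
    (lt_min ((min_le_left a b).trans_lt ha.2) (min_lt_max.2 hab))

lemma Real.exp_add_one_div_exp_sub_one {x : ℝ} (hx : x ≠ 0) :
    (exp x + 1) / (exp x - 1) = (cosh x + 1) / sinh x := by
  have he : exp x - 1 ≠ 0 := sub_ne_zero.2 (mt (exp_eq_one_iff x).1 hx)
  rw [div_eq_div_iff he (sinh_ne_zero.2 hx), cosh_eq, sinh_eq, exp_neg]
  field_simp
  ring

lemma isFixedPt_stepMap_cosh_sinh {ω τ : ℝ} (hω : ω ≠ 0) (hτ : τ ≠ 0) (L : ℝ) :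
    IsFixedPt (stepMap (cosh τ) (sinh τ / ω) (ω * sinh τ) (cosh τ) L)
      (-L / 2, ω * L / 2 * ((exp τ + 1) / (exp τ - 1))) := by
  have hs : sinh τ ≠ 0 := sinh_ne_zero.2 hτ
  simp only [IsFixedPt, stepMap, exp_add_one_div_exp_sub_one hτ, Prod.mk.injEq]
  constructor
  · field_simp
    ring
  · field_simp
    linear_combination L * cosh_sq_sub_sinh_sq τ

theorem stmt16_general (ω T c L' x₀ v₀ : ℝ) (hω : 0 < ω) (hT : 0 < T)
    (A11 A12 A21 A22 : ℝ)
    (hA11 : A11 = Real.cosh (ω * T)) (hA12 : A12 = Real.sinh (ω * T) / ω)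
    (hA21 : A21 = ω * Real.sinh (ω * T)) (hA22 : A22 = Real.cosh (ω * T))
    (xs vs : ℝ)
    (hxs : xs = -L' / 2)
    (hvs : vs = (ω * L' / 2) * ((Real.exp (ω * T) + 1) / (Real.exp (ω * T) - 1)))
    (Δx Δv : ℝ) (hΔx : Δx = x₀ - xs) (hΔv : Δv = v₀ - vs)
    (ΔL₁ ΔL₂ : ℝ)
    (hΔL₁ : ΔL₁ = ((A11 * A21 + A21 * A22 + A21) * Δx
      + (A12 * A21 + A22 ^ 2 + A22) * Δv) / A21)
    (hΔL₂ : ΔL₂ = ((A11 * A21 + A21 * A22 - A21) * Δx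
      + (A12 * A21 + A22 ^ 2 - A22) * Δv) / A21)
    (Lls Lus : ℝ)
    (hLls : Lls = max (A11 * x₀ + A12 * v₀ - c)
      ((2 * A11 - 1 / A11) * x₀ + 2 * A12 * v₀ - c / A11))
    (hLus : Lus = min (A11 * x₀ + A12 * v₀ + c)
      ((2 * A11 - 1 / A11) * x₀ + 2 * A12 * v₀ + c / A11))
    (hsafe : Lls < Lus)
    (hnz : A21 * Δx + A22 * Δv ≠ 0) :
    (Set.Ioo Lls Lus ∩ Set.Ioo (min ΔL₁ ΔL₂ + L') (max ΔL₁ ΔL₂ + L')).Nonempty := by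
  have hτ : ω * T ≠ 0 := (mul_pos hω hT).ne'
  have hA11_gt : 1 < A11 := hA11 ▸ one_lt_cosh.2 hτ
  have hA11_pos : 0 < A11 := zero_lt_one.trans hA11_gt
  have hA21_ne : A21 ≠ 0 := hA21 ▸ mul_ne_zero hω.ne' (sinh_ne_zero.2 hτ)
  have hA22_eq : A22 = A11 := hA22.trans hA11.symm
  have hdet : A11 * A22 - A12 * A21 = 1 := by
    rw [hA11, hA12, hA21, hA22]
    field_simp
    linear_combination cosh_sq_sub_sinh_sq (ω * T)
  have hfix : IsFixedPt (stepMap A11 A12 A21 A22 L') (xs, vs) := by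
    rw [hA11, hA12, hA21, hA22, hxs, hvs]
    exact isFixedPt_stepMap_cosh_sinh hω.ne' hτ L'
  have hcenter := mul_center_add_eq_of_isFixedPt_stepMap hA22_eq hdet hA11_pos.ne' hA11_gt.ne'
    hA21_ne hfix x₀ v₀
  have hmem : ΔL₂ + L' ∈ Ioo Lls Lus := by
    subst hLls hLus hΔL₂ hΔx hΔv
    exact mem_Ioo_of_overlap_of_reflect hA11_pos hcenter hsafe
  have hne : ΔL₂ + L' ≠ ΔL₁ + L' := by
    have hsub : ΔL₁ - ΔL₂ = 2 * (A21 * Δx + A22 * Δv) / A21 := by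
      rw [hΔL₁, hΔL₂]
      ring
    have hsub_ne : ΔL₁ - ΔL₂ ≠ 0 := hsub ▸ div_ne_zero (mul_ne_zero two_ne_zero hnz) hA21_ne
    intro h
    exact hsub_ne (by linarith)
  rw [← min_add_add_right, ← max_add_add_right, min_comm, max_comm]
  exact Ioo_inter_Ioo_min_max_nonempty hmem hne

/-- Proposition 3: if the safe step-length range at `(x₀,v₀)` is
nonempty and the state differs from the fixed point in the `A₂₁x + A₂₂v` direction,
then the safe range and the convergence range intersect. -/
theorem stmt16 (ω T c L' x₀ v₀ : ℝ) (hω : 0 < ω) (hT : 0 < T) (hc : 0 < c)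
    (A11 A12 A21 A22 : ℝ)
    (hA11 : A11 = Real.cosh (ω * T)) (hA12 : A12 = Real.sinh (ω * T) / ω)
    (hA21 : A21 = ω * Real.sinh (ω * T)) (hA22 : A22 = Real.cosh (ω * T))
    (xs vs : ℝ)
    (hxs : xs = -L' / 2)
    (hvs : vs = (ω * L' / 2) * ((Real.exp (ω * T) + 1) / (Real.exp (ω * T) - 1)))
    (Δx Δv : ℝ) (hΔx : Δx = x₀ - xs) (hΔv : Δv = v₀ - vs)
    (ΔL₁ ΔL₂ : ℝ)
    (hΔL₁ : ΔL₁ = ((A11 * A21 + A21 * A22 + A21) * Δx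
      + (A12 * A21 + A22 ^ 2 + A22) * Δv) / A21)
    (hΔL₂ : ΔL₂ = ((A11 * A21 + A21 * A22 - A21) * Δx
      + (A12 * A21 + A22 ^ 2 - A22) * Δv) / A21)
    (Lls Lus : ℝ)
    (hLls : Lls = max (A11 * x₀ + A12 * v₀ - c)
      ((2 * A11 - 1 / A11) * x₀ + 2 * A12 * v₀ - c / A11))
    (hLus : Lus = min (A11 * x₀ + A12 * v₀ + c)
      ((2 * A11 - 1 / A11) * x₀ + 2 * A12 * v₀ + c / A11))
    (hsafe : Lls < Lus)
    (hnz : A21 * Δx + A22 * Δv ≠ 0) :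
    (Set.Ioo Lls Lus ∩ Set.Ioo (min ΔL₁ ΔL₂ + L') (max ΔL₁ ΔL₂ + L')).Nonempty :=
  stmt16_general ω T c L' x₀ v₀ hω hT A11 A12 A21 A22 hA11 hA12 hA21 hA22 xs vs hxs hvs Δx Δv hΔx
    hΔv ΔL₁ ΔL₂ hΔL₁ hΔL₂ Lls Lus hLls hLus hsafe hnz
end

section
/- Let ω > 0, c > 0 (the slipping threshold μh), and (x₀, v₀) ∈ ℝ² with |x₀| < c and ωx₀ + v₀ > 0. Let x(t) = cosh(ωt)·x₀ + (sinh(ωt)/ω)·v₀ and define T_slip = (1/ω)·ln( (ωc + √((ωc)² + v₀² − ω²x₀²)) / (v₀ + ωx₀) ). Then T_slip > 0, x(T_slip) = c, and |x(t)| < c for all t ∈ [0, T_slip); i.e., T_slip is the first time at which the trajectory reaches the slipping boundary ±μh, and reducing the step time below T_slip prevents subsequent slippage. -/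
set_option maxHeartbeats 1600000

/-- with `|x₀| < c` and `ωx₀ + v₀ > 0`, the time
`T_slip = (1/ω)·ln((ωc + √((ωc)² + v₀² − ω²x₀²))/(v₀ + ωx₀))` is positive, the
trajectory reaches the slipping boundary at `T_slip` (`x(T_slip) = c`), and stays
strictly inside the boundary before (`|x(t)| < c` for `t ∈ [0, T_slip)`). -/
theorem stmt19 (ω c x₀ v₀ : ℝ) (hω : 0 < ω) (hc : 0 < c)
    (hx₀ : |x₀| < c) (hv : ω * x₀ + v₀ > 0)
    (x : ℝ → ℝ) (hx : x = fun t => Real.cosh (ω * t) * x₀ + (Real.sinh (ω * t) / ω) * v₀)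
    (Tslip : ℝ)
    (hTslip : Tslip = (1 / ω) * Real.log
      ((ω * c + Real.sqrt ((ω * c) ^ 2 + v₀ ^ 2 - ω ^ 2 * x₀ ^ 2)) / (v₀ + ω * x₀))) :
    0 < Tslip ∧ x Tslip = c ∧ ∀ t ∈ Set.Ico 0 Tslip, |x t| < c := by
  obtain ⟨hx₀l, hx₀r⟩ := abs_lt.mp hx₀
  set a : ℝ := v₀ + ω * x₀ with ha_def
  set b : ℝ := ω * x₀ - v₀ with hb_def
  set D : ℝ := (ω * c) ^ 2 + v₀ ^ 2 - ω ^ 2 * x₀ ^ 2 with hD_def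
  set s : ℝ := Real.sqrt D with hs_def
  have ha : 0 < a := by rw [ha_def]; linarith
  have hx2 : x₀ ^ 2 < c ^ 2 := by nlinarith [sq_lt_sq' hx₀l hx₀r]
  have hD : 0 < D := by
    rw [hD_def]
    nlinarith [mul_pos (pow_pos hω 2) (sub_pos.mpr hx2), sq_nonneg v₀]
  have hs2 : s ^ 2 = D := Real.sq_sqrt hD.le
  have hs0 : 0 < s := Real.sqrt_pos.mpr hD
  have hs2' : s ^ 2 = (ω * c) ^ 2 + v₀ ^ 2 - ω ^ 2 * x₀ ^ 2 := by rw [hs2, hD_def]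
  have hsv : v₀ < s := by
    by_contra h
    push_neg at h
    have hv0 : 0 < v₀ := lt_of_lt_of_le hs0 h
    nlinarith [hs2', mul_pos (pow_pos hω 2) (sub_pos.mpr hx2)]
  set U : ℝ := (ω * c + s) / a with hU_def
  clear_value b D
  have hU1 : 1 < U := by
    rw [hU_def, lt_div_iff₀ ha]
    nlinarith
  have hU0 : 0 < U := lt_trans one_pos hU1
  -- the key root identity
  have haU : a * U = ω * c + s := by
    rw [hU_def]; field_simp
  have hroot : a * U ^ 2 - 2 * ω * c * U + b = 0 := by
    have h : a * (a * U ^ 2 - 2 * ω * c * U + b) = 0 := by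
      have : a * (a * U ^ 2 - 2 * ω * c * U + b) =
          (a * U) ^ 2 - 2 * ω * c * (a * U) + a * b := by ring
      rw [this, haU]
      nlinarith [hs2]
    rcases mul_eq_zero.mp h with h' | h'
    · exact absurd h' ha.ne'
    · exact h'
  clear_value a s U
  -- Tslip > 0
  have hT0 : 0 < Tslip := by
    rw [hTslip]
    exact mul_pos (by positivity) (Real.log_pos hU1)
  -- exp(ω Tslip) = U
  have hexp : Real.exp (ω * Tslip) = U := by
    rw [hTslip]
    have : ω * (1 / ω * Real.log U) = Real.log U := by field_simp
    rw [this, Real.exp_log hU0]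
  -- general formula for x t in terms of u = exp(ω t)
  have hform : ∀ t : ℝ, x t = (a * Real.exp (ω * t) ^ 2 + b) / (2 * ω * Real.exp (ω * t)) := by
    intro t
    rw [hx]
    simp only [Real.cosh_eq, Real.sinh_eq]
    have he : Real.exp (-(ω * t)) = (Real.exp (ω * t))⁻¹ := Real.exp_neg _
    rw [he, ha_def, hb_def]
    have hu : Real.exp (ω * t) ≠ 0 := (Real.exp_pos _).ne'
    field_simp
    ring
  -- x Tslip = c
  have hxT : x Tslip = c := by
    rw [hform Tslip, hexp]
    rw [div_eq_iff (by positivity)]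
    nlinarith [hroot]
  refine ⟨hT0, hxT, ?_⟩
  -- key: ω c < s + a
  have hsa : ω * c < s + a := by
    by_contra h
    push_neg at h
    have h1 : s ≤ ω * c - a := by linarith
    have h2 : s * s ≤ (ω * c - a) * (ω * c - a) :=
      mul_le_mul h1 h1 hs0.le (by linarith)
    have key : (ω * c - a) * (ω * c - a) =
        ((ω * c) ^ 2 + v₀ ^ 2 - ω ^ 2 * x₀ ^ 2) - 2 * ω * a * (c - x₀) + 0 := by
      rw [ha_def]; ring
    have pos : 0 < 2 * ω * a * (c - x₀) := by
      apply mul_pos (by positivity); linarith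
    nlinarith [hs2']
  intro t ht
  obtain ⟨ht0, htT⟩ := ht
  set u : ℝ := Real.exp (ω * t) with hu_def
  have hu0 : 0 < u := Real.exp_pos _
  have hu1 : 1 ≤ u := by
    rw [hu_def, ← Real.exp_zero]
    exact Real.exp_le_exp.mpr (by nlinarith)
  have huU : u < U := by
    rw [hu_def, ← hexp]
    exact Real.exp_lt_exp.mpr (by nlinarith)
  -- upper bound: a u² - 2 ω c u + b < 0
  have hfac : 0 < a * (u + U) - 2 * ω * c := by
    have h1 : a ≤ a * u := by nlinarith
    nlinarith [haU]
  have hup : a * u ^ 2 - 2 * ω * c * u + b < 0 := by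
    nlinarith [mul_pos (sub_pos.mpr huU) hfac, hroot]
  -- lower bound: a u² + 2 ω c u + b > 0
  have hlo : 0 < a * u ^ 2 + 2 * ω * c * u + b := by
    have hab : a + b = 2 * ω * x₀ := by rw [ha_def, hb_def]; ring
    have h1 : 0 ≤ a * (u ^ 2 - 1) := mul_nonneg ha.le (by nlinarith)
    have h2 : 0 ≤ 2 * ω * c * (u - 1) := by
      apply mul_nonneg (by positivity); linarith
    have h3 : 0 < ω * (x₀ + c) := mul_pos hω (by linarith)
    nlinarith
  rw [hform t, ← hu_def, abs_lt]
  constructor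
  · rw [lt_div_iff₀ (by positivity)]
    nlinarith
  · rw [div_lt_iff₀ (by positivity)]
    nlinarith
end
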